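/- Let M = (X,d) be a finite metric space and T_M a minimum spanning tree of the complete graph K_M on X with edge weights d(x,y). Then the weighted path metric of T_M coincides with d on all pairs of points (i.e., T_M is isometric to K_M) if and only if M satisfies both the four-point condition and the fourth-point condition. -/

import Mathlib

/-- The total weight of a walk in a graph, with respect to an edge-weight
function `w` on pairs of vertices. -/
def SimpleGraph.Walk.weight {V : Type*} {G : SimpleGraph V} (w : V → V → ℝ)
    {u v : V} (p : G.Walk u v) : ℝ :=
  (p.darts.map fun d => w d.toProd.1 d.toProd.2).sum

/-- The four-point condition for a metric space. -/
def FourPointCond (X : Type*) [MetricSpace X] : Prop :=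
  ∀ q r s t : X,
    dist q r + dist s t ≤ max (dist q s + dist r t) (dist r s + dist q t)

/-- The fourth-point condition for a metric space. -/
def FourthPointCond (X : Type*) [MetricSpace X] : Prop :=
  ∀ x y z : X, ∃ p : X,
    dist x p + dist y p + dist z p = (dist x y + dist y z + dist z x) / 2

/-- The total length of a graph on the point set of a metric space, where each edge
`xy` is weighted by `dist x y` (the edge weights of the complete graph `K_M`). -/
noncomputable def totalDist {X : Type*} [MetricSpace X] [Fintype X]
    (G : SimpleGraph X) : ℝ :=
  letI := Classical.decEq X
  letI : DecidableRel G.Adj := fun _ _ => Classical.dec _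
  ∑ e ∈ G.edgeFinset, Sym2.lift ⟨fun a b => dist a b, fun a b => dist_comm a b⟩ e

/-!
If the path metric of `T` is `d`, then `d` is a tree metric: the path from `z` to the `x`–`y` path
meets it in a median of `x, y, z`, which gives the fourth-point condition, and comparing the
positions of the medians of `s` and `t` on the `q`–`r` path gives the four-point condition.

Conversely, minimality of `T` forbids a point `m` strictly between the ends of a tree edge `uv`:
exchanging `uv` for the edge from `m` to the endpoint on the other side of the cut would give a
lighter spanning tree. Applied to a median of `x, b, c` this makes every two-edge path `x b c`
geodesic, and the four-point condition glues geodesics overlapping in an edge, so by induction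
every path of `T` is geodesic.
-/

namespace SimpleGraph.Walk

variable {V : Type*} {G : SimpleGraph V} {w : V → V → ℝ}

@[simp]
lemma weight_nil {u : V} : (nil : G.Walk u u).weight w = 0 := rfl

@[simp]
lemma weight_cons {u v x : V} (h : G.Adj u v) (p : G.Walk v x) :
    (cons h p).weight w = w u v + p.weight w := by
  simp [weight]

lemma weight_append {u v x : V} (p : G.Walk u v) (q : G.Walk v x) :
    (p.append q).weight w = p.weight w + q.weight w := by
  simp [weight, darts_append]

lemma exists_append_eq_of_mem_first (S : Set V) {u v : V} (p : G.Walk u v) (hv : v ∈ S) :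
    ∃ (m : V) (p₁ : G.Walk u m) (p₂ : G.Walk m v),
      p₁.append p₂ = p ∧ m ∈ S ∧ ∀ x ∈ p₁.support, x ∈ S → x = m := by
  induction p with
  | nil => exact ⟨_, nil, nil, rfl, hv, by simp⟩
  | @cons a b c h q ih =>
    by_cases ha : a ∈ S
    · exact ⟨a, nil, cons h q, rfl, ha, by simp⟩
    · obtain ⟨m, p₁, p₂, rfl, hm, hfirst⟩ := ih hv
      refine ⟨m, cons h p₁, p₂, rfl, hm, fun x hx hxS ↦ ?_⟩
      rcases List.mem_cons.mp hx with rfl | hx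
      · exact absurd hxS ha
      · exact hfirst x hx hxS

end SimpleGraph.Walk

lemma SimpleGraph.Connected.reachable_deleteEdges_or {V : Type*} {G : SimpleGraph V}
    (hG : G.Connected) (u v w : V) :
    (G.deleteEdges {s(u, v)}).Reachable w u ∨ (G.deleteEdges {s(u, v)}).Reachable w v := by
  classical
  obtain ⟨P, hP⟩ := hG.exists_isPath w u
  by_cases heP : s(u, v) ∈ P.edges
  · right
    have hvP := P.snd_mem_support_of_mem_edges heP
    have huP := Walk.endpoint_notMem_support_takeUntil hP hvP (P.adj_of_mem_edges heP).ne
    exact reachable_deleteEdges_iff_exists_walk.mpr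
      ⟨P.takeUntil v hvP, fun h ↦ huP ((P.takeUntil v hvP).fst_mem_support_of_mem_edges h)⟩
  · exact Or.inl (reachable_deleteEdges_iff_exists_walk.mpr ⟨P, heP⟩)

lemma dist_le_walk_weight {V : Type*} [PseudoMetricSpace V] {G : SimpleGraph V} {u v : V}
    (p : G.Walk u v) : dist u v ≤ p.weight (fun a b ↦ dist a b) := by
  induction p with
  | nil => simp
  | @cons a b c _ _ ih =>
    rw [SimpleGraph.Walk.weight_cons]
    linarith [dist_triangle a b c]

variable {X : Type*} [MetricSpace X]

def IsMedian (x y z m : X) : Prop :=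
  dist x m + dist m y = dist x y ∧ dist y m + dist m z = dist y z ∧
    dist z m + dist m x = dist z x

/-- Each equation of `IsMedian` holds as `≥` by the triangle inequality, and their sum is the
fourth-point equation. -/
lemma fourthPointCond_iff_forall_exists_isMedian :
    FourthPointCond X ↔ ∀ x y z : X, ∃ m, IsMedian x y z m := by
  refine forall₃_congr fun x y z ↦ exists_congr fun m ↦ ?_
  have := dist_triangle x m y
  have := dist_triangle y m z
  have := dist_triangle z m x
  have := dist_comm m x
  have := dist_comm m y
  have := dist_comm m z
  simp only [IsMedian]
  constructor
  · intro h; refine ⟨?_, ?_, ?_⟩ <;> linarith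
  · rintro ⟨h₁, h₂, h₃⟩; linarith

lemma dist_add_dist_le_of_isMedian {q r s t a b : X} (ha : IsMedian q r s a)
    (hb : IsMedian q r t b) (hab : dist q b = dist q a + dist a b) :
    dist q r + dist s t ≤ dist r s + dist q t := by
  obtain ⟨ha₁, ha₂, -⟩ := ha
  obtain ⟨-, -, hb₃⟩ := hb
  linarith [dist_triangle s a b, dist_triangle s b t, dist_comm r a, dist_comm s a, dist_comm q b,
    dist_comm t q, dist_comm t b]

lemma FourPointCond.dist_add_dist_eq {x b c y : X} (h : FourPointCond X) (hbc : b ≠ c)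
    (hxc : dist x b + dist b c = dist x c) (hby : dist b c + dist c y = dist b y) :
    dist x b + dist b y = dist x y := by
  have hpos := dist_pos.mpr hbc
  have htri := dist_triangle x b y
  rcases le_max_iff.mp (h x c b y) with hle | hle
  · linarith
  · linarith [dist_comm c b]

def IsPathIsometric (T : SimpleGraph X) : Prop :=
  ∀ x y : X, ∀ p : T.Walk x y, p.IsPath → p.weight (fun a b ↦ dist a b) = dist x y

namespace IsPathIsometric

variable {T : SimpleGraph X} (hiso : IsPathIsometric T)
include hiso

lemma dist_add_dist_of_mem_support {x y a : X} {p : T.Walk x y} (hp : p.IsPath)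
    (ha : a ∈ p.support) : dist x a + dist a y = dist x y := by
  classical
  rw [← hiso _ _ _ (hp.takeUntil ha), ← hiso _ _ _ (hp.dropUntil ha), ← hiso _ _ _ hp,
    ← SimpleGraph.Walk.weight_append, SimpleGraph.Walk.take_spec]

lemma dist_eq_add_or_dist_eq_add {x y a b : X} {p : T.Walk x y} (hp : p.IsPath)
    (ha : a ∈ p.support) (hb : b ∈ p.support) :
    dist x b = dist x a + dist a b ∨ dist x a = dist x b + dist b a := by
  classical
  have hxay := hiso.dist_add_dist_of_mem_support hp ha
  have hxby := hiso.dist_add_dist_of_mem_support hp hb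
  rw [← p.take_spec ha, SimpleGraph.Walk.mem_support_append_iff] at hb
  rcases hb with hb | hb
  · exact Or.inr (hiso.dist_add_dist_of_mem_support (hp.takeUntil ha) hb).symm
  · have hayb := hiso.dist_add_dist_of_mem_support (hp.dropUntil ha) hb
    left; linarith

lemma exists_isMedian_mem_support (hconn : T.Connected) {a b : X} {P : T.Walk a b}
    (hP : P.IsPath) (c : X) : ∃ m ∈ P.support, IsMedian a b c m := by
  classical
  obtain ⟨Q, hQ⟩ := hconn.exists_isPath b c
  obtain ⟨m, p₁, p₂, rfl, hmQ : m ∈ Q.support, hfirst⟩ :=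
    P.exists_append_eq_of_mem_first {v | v ∈ Q.support} Q.start_mem_support
  have hp₁ := hP.of_append_left
  have hq₂ := hQ.dropUntil hmQ
  have hq₂_nodup := hq₂.support_nodup
  rw [← SimpleGraph.Walk.cons_tail_support, List.nodup_cons] at hq₂_nodup
  have hpath : (p₁.append (Q.dropUntil m hmQ)).IsPath := by
    rw [SimpleGraph.Walk.isPath_def, SimpleGraph.Walk.support_append]
    refine hp₁.support_nodup.append hq₂_nodup.2 fun v hv₁ hv₂ ↦ ?_
    have hvQ := Q.support_dropUntil_subset_support hmQ (List.mem_of_mem_tail hv₂)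
    exact hq₂_nodup.1 (hfirst v hv₁ hvQ ▸ hv₂)
  have hmP : m ∈ (p₁.append p₂).support :=
    (SimpleGraph.Walk.mem_support_append_iff _ _).mpr (Or.inl p₁.end_mem_support)
  have hamc := hiso _ _ _ hpath
  rw [SimpleGraph.Walk.weight_append, hiso _ _ _ hp₁, hiso _ _ _ hq₂] at hamc
  refine ⟨m, hmP, hiso.dist_add_dist_of_mem_support hP hmP,
    hiso.dist_add_dist_of_mem_support hQ hmQ, ?_⟩
  linarith [dist_comm c m, dist_comm m a, dist_comm c a]

lemma fourthPointCond (hconn : T.Connected) : FourthPointCond X := by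
  refine fourthPointCond_iff_forall_exists_isMedian.mpr fun x y z ↦ ?_
  obtain ⟨P, hP⟩ := hconn.exists_isPath x y
  obtain ⟨m, -, hm⟩ := hiso.exists_isMedian_mem_support hconn hP z
  exact ⟨m, hm⟩

/-- Along the `q`–`r` path the median `a` of `q, r, s` precedes or follows the median `b` of
`q, r, t`; either way one of the two pairings in the four-point condition dominates. -/
lemma fourPointCond (hconn : T.Connected) : FourPointCond X := by
  intro q r s t
  obtain ⟨P, hP⟩ := hconn.exists_isPath q r
  obtain ⟨a, haP, ha⟩ := hiso.exists_isMedian_mem_support hconn hP s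
  obtain ⟨b, hbP, hb⟩ := hiso.exists_isMedian_mem_support hconn hP t
  rcases hiso.dist_eq_add_or_dist_eq_add hP haP hbP with hab | hba
  · exact le_max_of_le_right (dist_add_dist_le_of_isMedian ha hb hab)
  · have := dist_add_dist_le_of_isMedian hb ha hba
    exact le_max_of_le_left (by linarith [dist_comm s t])

end IsPathIsometric

variable [Fintype X]

lemma totalDist_eq_sum (G : SimpleGraph X) [Fintype G.edgeSet] :
    totalDist G =
      ∑ e ∈ G.edgeFinset, Sym2.lift ⟨fun a b => dist a b, fun a b => dist_comm a b⟩ e := by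
  unfold totalDist
  congr 1
  exact Finset.coe_injective (by simp)

lemma totalDist_add_dist_of_edgeSet_eq {G G' : SimpleGraph X} {u v a b : X}
    (huv : s(u, v) ∈ G.edgeSet) (hab : s(a, b) ∉ G.edgeSet)
    (h : G'.edgeSet = insert s(a, b) (G.edgeSet \ {s(u, v)})) :
    totalDist G' + dist u v = totalDist G + dist a b := by
  classical
  have hfin : G'.edgeFinset = insert s(a, b) (G.edgeFinset.erase s(u, v)) := by
    ext e
    simp [h, and_comm]
  rw [totalDist_eq_sum G', totalDist_eq_sum G, hfin,
    Finset.sum_insert fun h ↦ hab (G.mem_edgeFinset.mp (Finset.mem_of_mem_erase h)),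
    Finset.sum_erase_eq_sub (G.mem_edgeFinset.mpr huv)]
  simp only [Sym2.lift_mk]
  ring

def IsMinSpanningTree (T : SimpleGraph X) : Prop :=
  T.IsTree ∧ ∀ G : SimpleGraph X, G.IsTree → totalDist T ≤ totalDist G

namespace IsMinSpanningTree

variable {T : SimpleGraph X} (hT : IsMinSpanningTree T)
include hT

open SimpleGraph in
/-- Exchanging the edge `uv` for `mv`, with `m` on `u`'s side of the cut, gives a spanning tree. -/
lemma dist_le_of_reachable_deleteEdges {u v m : X} (huv : T.Adj u v)
    (hm : (T.deleteEdges {s(u, v)}).Reachable m u) : dist u v ≤ dist m v := by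
  classical
  set D := T.deleteEdges {s(u, v)}
  have hnr : ¬ D.Reachable u v :=
    isBridge_iff.mp (isAcyclic_iff_forall_adj_isBridge.mp hT.1.isAcyclic huv)
  have hmv : ¬ D.Reachable m v := fun h ↦ hnr (hm.symm.trans h)
  have hmv' : m ≠ v := by rintro rfl; exact hmv .rfl
  rcases eq_or_ne m u with rfl | hmu
  · rfl
  have hnadj : ¬ T.Adj m v := fun h ↦ hmv (Adj.reachable (by simp [D, h, hmu, hmv']))
  have htree : (D ⊔ edge m v).IsTree := by
    refine ⟨?_, (hT.1.isAcyclic.anti (T.deleteEdges_le _)).sup_edge_of_not_reachable hmv⟩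
    have hmvadj : (D ⊔ edge m v).Adj m v := by simp [edge_adj, hmv']
    refine (connected_iff_exists_forall_reachable _).2 ⟨v, fun w ↦ Reachable.symm ?_⟩
    rcases hT.1.connected.reachable_deleteEdges_or u v w with h | h
    · exact ((h.trans hm.symm).mono le_sup_left).trans hmvadj.reachable
    · exact h.mono le_sup_left
  have hedges : (D ⊔ edge m v).edgeSet = insert s(m, v) (T.edgeSet \ {s(u, v)}) := by
    rw [edgeSet_sup, edgeSet_deleteEdges, edgeSet_edge_of_ne hmv', Set.union_singleton]
  have := totalDist_add_dist_of_edgeSet_eq huv hnadj hedges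
  linarith [hT.2 _ htree]

lemma eq_or_eq_of_dist_add_dist_eq {u v m : X} (huv : T.Adj u v)
    (hm : dist u m + dist m v = dist u v) : m = u ∨ m = v := by
  by_contra! hne
  rcases hT.1.connected.reachable_deleteEdges_or u v m with h | h
  · have := hT.dist_le_of_reachable_deleteEdges huv h
    linarith [dist_pos.mpr hne.1, dist_comm m u]
  · rw [Sym2.eq_swap] at h
    have := hT.dist_le_of_reachable_deleteEdges huv.symm h
    linarith [dist_pos.mpr hne.2, dist_comm u v, dist_comm m u]

lemma dist_add_dist_eq_of_adj_of_adj (h : FourthPointCond X) {x b c : X} (hxb : T.Adj x b)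
    (hbc : T.Adj b c) (hxc : x ≠ c) : dist x b + dist b c = dist x c := by
  obtain ⟨m, hxm, hbm, hcm⟩ := fourthPointCond_iff_forall_exists_isMedian.mp h x b c
  have hx := hT.eq_or_eq_of_dist_add_dist_eq hxb hxm
  have hc := hT.eq_or_eq_of_dist_add_dist_eq hbc hbm
  obtain rfl : m = b := by grind
  linarith [dist_comm c m, dist_comm m x, dist_comm c x]

lemma isPathIsometric (h₄ : FourPointCond X) (h₅ : FourthPointCond X) : IsPathIsometric T := by
  intro _ _ p hp
  induction p with
  | nil => simp
  | @cons x b y hxb q ih =>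
    have hq := ih hp.of_cons
    rw [SimpleGraph.Walk.weight_cons, hq]
    cases q with
    | nil => simp
    | @cons _ c _ hbc q' =>
      have hxc : x ≠ c := by
        rintro rfl
        exact (SimpleGraph.Walk.cons_isPath_iff _ _).mp hp |>.2 (by simp)
      have hbcy : dist b c + dist c y = dist b y := by
        rw [SimpleGraph.Walk.weight_cons] at hq
        linarith [dist_triangle b c y, dist_le_walk_weight q']
      exact h₄.dist_add_dist_eq hbc.ne (hT.dist_add_dist_eq_of_adj_of_adj h₅ hxb hbc hxc) hbcy

end IsMinSpanningTree

theorem mst_isometric_iff_four_point_and_fourth_point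
    {X : Type} [MetricSpace X] [Fintype X] (T : SimpleGraph X) (hT : T.IsTree)
    (hmst : ∀ G' : SimpleGraph X, G'.IsTree → totalDist T ≤ totalDist G') :
    (∀ x y : X, ∀ p : T.Walk x y, p.IsPath →
        p.weight (fun a b => dist a b) = dist x y)
      ↔ (FourPointCond X ∧ FourthPointCond X) := by
  show IsPathIsometric T ↔ _
  exact ⟨fun hiso ↦ ⟨hiso.fourPointCond hT.connected, hiso.fourthPointCond hT.connected⟩,
    fun ⟨h₄, h₅⟩ ↦ IsMinSpanningTree.isPathIsometric ⟨hT, hmst⟩ h₄ h₅⟩
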